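/- arXiv:2012.07406 — 2 statements merged into one kernel-verified Lean document; each statement's English description precedes it below -/
import Mathlib

section
/- Let $\alpha\in(2/3,1)$ and set $A=\bigcup_{n=1}^{\infty} [2^n-2^{(n-1)/3},\,2^n)\subseteq(0,\infty)$. Then $\int_A x^{\alpha-1}\,dx=\infty$. -/
open MeasureTheory

/-- For `α ∈ (2/3,1)`, the set `A = ⋃_{n≥1} [2^n - 2^{(n-1)/3}, 2^n)` has
infinite potential: `∫_A x^{α-1} dx = ∞`. -/
theorem stmt6 (α : ℝ) (hα : α ∈ Set.Ioo (2/3 : ℝ) 1) :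
    ∫⁻ x in ⋃ n : ℕ,
        Set.Ico ((2:ℝ) ^ ((n:ℝ) + 1) - (2:ℝ) ^ ((n:ℝ) / 3)) ((2:ℝ) ^ ((n:ℝ) + 1)),
      ENNReal.ofReal (x ^ (α - 1)) = ⊤ := by
  set s : ℕ → Set ℝ := fun n =>
    Set.Ico ((2:ℝ) ^ ((n:ℝ) + 1) - (2:ℝ) ^ ((n:ℝ) / 3)) ((2:ℝ) ^ ((n:ℝ) + 1)) with hs
  have h2 : (1:ℝ) ≤ 2 := one_le_two
  -- key bounds
  have hup : ∀ n : ℕ, (2:ℝ) ^ ((n:ℝ) / 3) ≤ (2:ℝ) ^ (n:ℝ) := fun n =>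
    Real.rpow_le_rpow_of_exponent_le h2 (by
      have : (0:ℝ) ≤ (n:ℝ) := Nat.cast_nonneg n
      linarith)
  have hdbl : ∀ n : ℕ, (2:ℝ) ^ ((n:ℝ) + 1) = 2 * (2:ℝ) ^ (n:ℝ) := fun n => by
    rw [Real.rpow_add two_pos, Real.rpow_one, mul_comm]
  have hlow : ∀ n : ℕ, (2:ℝ) ^ (n:ℝ) ≤ (2:ℝ) ^ ((n:ℝ) + 1) - (2:ℝ) ^ ((n:ℝ) / 3) := by
    intro n
    have := hup n
    rw [hdbl n]; linarith
  have hlowpos : ∀ n : ℕ, (0:ℝ) < (2:ℝ) ^ ((n:ℝ) + 1) - (2:ℝ) ^ ((n:ℝ) / 3) := fun n =>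
    lt_of_lt_of_le (Real.rpow_pos_of_pos two_pos _) (hlow n)
  -- disjointness
  have hdisj : Pairwise (Function.onFun Disjoint s) := by
    have key : ∀ m n : ℕ, m < n → Disjoint (s m) (s n) := by
      intro m n hlt
      have hkey : (2:ℝ) ^ ((m:ℝ) + 1) ≤ (2:ℝ) ^ ((n:ℝ) + 1) - (2:ℝ) ^ ((n:ℝ) / 3) := by
        refine le_trans ?_ (hlow n)
        exact Real.rpow_le_rpow_of_exponent_le h2 (by exact_mod_cast Nat.succ_le_of_lt hlt)
      exact Set.Ico_disjoint_Ico.mpr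
        (by simp only [min_le_iff, le_max_iff]; right; left; exact hkey)
    intro m n hmn
    rcases lt_or_gt_of_ne hmn with h | h
    · exact key m n h
    · exact (key n m h).symm
  have hmeas : ∀ n, MeasurableSet (s n) := fun n => measurableSet_Ico
  rw [lintegral_iUnion hmeas hdisj]
  -- lower bound each integral by a fixed positive constant
  have hconst : ∀ n : ℕ,
      ENNReal.ofReal ((2:ℝ) ^ (α - 1)) ≤ ∫⁻ x in s n, ENNReal.ofReal (x ^ (α - 1)) := by
    intro n
    have hpt : ∀ x ∈ s n, ENNReal.ofReal (((2:ℝ) ^ ((n:ℝ) + 1)) ^ (α - 1))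
        ≤ ENNReal.ofReal (x ^ (α - 1)) := by
      intro x hx
      apply ENNReal.ofReal_le_ofReal
      exact Real.rpow_le_rpow_of_nonpos (lt_of_lt_of_le (hlowpos n) hx.1) hx.2.le
        (by linarith [hα.2])
    calc ENNReal.ofReal ((2:ℝ) ^ (α - 1))
        ≤ ENNReal.ofReal (((2:ℝ) ^ ((n:ℝ) + 1)) ^ (α - 1)) * volume (s n) := by
          rw [hs, Real.volume_Ico, ← Real.rpow_mul (by positivity : (0:ℝ) ≤ 2),
            ← ENNReal.ofReal_mul (by positivity)]
          apply ENNReal.ofReal_le_ofReal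
          have hsub : (2:ℝ) ^ ((n:ℝ) + 1) - ((2:ℝ) ^ ((n:ℝ) + 1) - (2:ℝ) ^ ((n:ℝ) / 3))
              = (2:ℝ) ^ ((n:ℝ) / 3) := by ring
          rw [hsub, ← Real.rpow_add two_pos]
          apply Real.rpow_le_rpow_of_exponent_le h2
          have hαb : (2:ℝ)/3 < α := hα.1
          have hα1 : α < 1 := hα.2
          have hn : (0:ℝ) ≤ (n:ℝ) := Nat.cast_nonneg n
          nlinarith
      _ ≤ ∫⁻ x in s n, ENNReal.ofReal (x ^ (α - 1)) := by
          rw [← setLIntegral_const]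
          exact setLIntegral_mono' (hmeas n) hpt
  refine top_unique (le_trans ?_ (ENNReal.tsum_le_tsum hconst))
  rw [ENNReal.tsum_const_eq_top_of_ne_zero]
  positivity
end

section
/- Let $g:(0,\infty)\to[0,\infty]$ be nonincreasing, let $S_n=(2^{-(n+1)},2^{-n}]$ for $n\in\mathbb N$, let $c\in(0,1)$, and let $B\subseteq(0,\infty)$ be a Lebesgue measurable set such that $\lambda(B\cap S_n)\le c\,\lambda(S_n)=c\,2^{-(n+1)}$ for some fixed $n$. Then $\int_{B\cap S_n} g\,d\lambda \le \frac{2c}{1-c}\int_{((0,\infty)\setminus B)\cap S_{n+1}} g\,d\lambda$. -/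
open MeasureTheory

/- `g` is at most `g(2^{-(n+1)})` on `S_n` and at least that value on `S_{n+1}`, so it
suffices to compare measures: `λ(B ∩ S_n) ≤ c λ(S_n) = 2c λ(S_{n+1})`, while
`λ(S_{n+1} \ B) ≥ (1 - c) λ(S_{n+1})`. -/

theorem setLIntegral_le_mul_setLIntegral_of_le_of_le {α : Type*} [MeasurableSpace α]
    {μ : Measure α} {g : α → ENNReal} {s t : Set α} (ht : MeasurableSet t) {C k : ENNReal}
    (hgs : ∀ x ∈ s, g x ≤ C) (hgt : ∀ x ∈ t, C ≤ g x) (hst : μ s ≤ k * μ t) :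
    ∫⁻ x in s, g x ∂μ ≤ k * ∫⁻ x in t, g x ∂μ :=
  calc ∫⁻ x in s, g x ∂μ ≤ ∫⁻ _ in s, C ∂μ := setLIntegral_mono measurable_const hgs
    _ = C * μ s := setLIntegral_const s C
    _ ≤ C * (k * μ t) := by gcongr
    _ = k * ∫⁻ _ in t, C ∂μ := by rw [setLIntegral_const]; ring
    _ ≤ k * ∫⁻ x in t, g x ∂μ := by gcongr 1; exact setLIntegral_mono' ht hgt

def dyadicShell (n : ℕ) : Set ℝ := Set.Ioc ((2:ℝ) ^ (-((n:ℝ) + 1))) ((2:ℝ) ^ (-(n:ℝ)))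

theorem dyadicShell_succ (n : ℕ) :
    dyadicShell (n + 1) = Set.Ioc ((2:ℝ) ^ (-((n:ℝ) + 2))) ((2:ℝ) ^ (-((n:ℝ) + 1))) := by
  simp only [dyadicShell]; push_cast; ring_nf

theorem dyadicShell_subset_Ioi (n : ℕ) : dyadicShell n ⊆ Set.Ioi 0 :=
  fun _ hx ↦ (Real.rpow_pos_of_pos two_pos _).trans hx.1

theorem two_rpow_neg_succ (x : ℝ) : (2:ℝ) ^ (-(x + 1)) = 2 * (2:ℝ) ^ (-(x + 2)) := by
  rw [show -(x + 1) = 1 + -(x + 2) by ring, Real.rpow_add two_pos, Real.rpow_one]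

theorem volume_dyadicShell (n : ℕ) :
    volume (dyadicShell n) = ENNReal.ofReal (2 ^ (-((n:ℝ) + 1))) := by
  rw [dyadicShell, Real.volume_Ioc, show -(n:ℝ) = -((n:ℝ) - 1 + 1) by ring, two_rpow_neg_succ]
  ring_nf

theorem volume_inter_dyadicShell_le_mul_volume_dyadicShell_succ_sdiff {B : Set ℝ} {c : ℝ}
    (hc : c ∈ Set.Ioo (0:ℝ) 1)
    (hB : ∀ m : ℕ,
      volume (B ∩ dyadicShell m) ≤ ENNReal.ofReal (c * (2:ℝ) ^ (-((m:ℝ) + 1))))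
    (n : ℕ) :
    volume (B ∩ dyadicShell n)
      ≤ ENNReal.ofReal (2 * c / (1 - c)) * volume (dyadicShell (n + 1) \ B) := by
  obtain ⟨hc0, hc1⟩ := hc
  set e : ℝ := (2:ℝ) ^ (-((n:ℝ) + 2))
  have he : 0 < e := Real.rpow_pos_of_pos two_pos _
  have hvol : volume (dyadicShell (n + 1)) = ENNReal.ofReal e := by
    rw [volume_dyadicShell]; congr 2; push_cast; ring
  have hBsucc : volume (B ∩ dyadicShell (n + 1)) ≤ ENNReal.ofReal (c * e) := by
    convert hB (n + 1) using 4; push_cast; ring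
  have hsdiff : ENNReal.ofReal ((1 - c) * e) ≤ volume (dyadicShell (n + 1) \ B) :=
    calc ENNReal.ofReal ((1 - c) * e) = ENNReal.ofReal e - ENNReal.ofReal (c * e) := by
          rw [← ENNReal.ofReal_sub _ (by positivity)]; ring_nf
      _ ≤ volume (dyadicShell (n + 1)) - volume (B ∩ dyadicShell (n + 1)) := by
          rw [hvol]; gcongr
      _ ≤ volume (dyadicShell (n + 1) \ (B ∩ dyadicShell (n + 1))) := le_measure_sdiff
      _ = volume (dyadicShell (n + 1) \ B) := by rw [Set.sdiff_inter_self_eq_sdiff]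
  calc volume (B ∩ dyadicShell n) ≤ ENNReal.ofReal (c * (2:ℝ) ^ (-((n:ℝ) + 1))) := hB n
    _ = ENNReal.ofReal (2 * c / (1 - c)) * ENNReal.ofReal ((1 - c) * e) := by
        rw [← ENNReal.ofReal_mul (div_nonneg (by linarith) (by linarith)), two_rpow_neg_succ]
        congr 1
        field_simp [show (1:ℝ) - c ≠ 0 by linarith]
        ring
    _ ≤ ENNReal.ofReal (2 * c / (1 - c)) * volume (dyadicShell (n + 1) \ B) := by gcongr

theorem stmt7_general (g : ℝ → ENNReal) (hg : AntitoneOn g (Set.Ioi 0))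
    (c : ℝ) (hc : c ∈ Set.Ioo (0:ℝ) 1)
    (B : Set ℝ) (hB : MeasurableSet B)
    (hmeas : ∀ m : ℕ,
      volume (B ∩ Set.Ioc ((2:ℝ) ^ (-((m:ℝ) + 1))) ((2:ℝ) ^ (-(m:ℝ))))
        ≤ ENNReal.ofReal (c * (2:ℝ) ^ (-((m:ℝ) + 1))))
    (n : ℕ) :
    ∫⁻ x in B ∩ Set.Ioc ((2:ℝ) ^ (-((n:ℝ) + 1))) ((2:ℝ) ^ (-(n:ℝ))), g x
      ≤ ENNReal.ofReal (2 * c / (1 - c)) *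
        ∫⁻ x in (Set.Ioi (0:ℝ) \ B) ∩
            Set.Ioc ((2:ℝ) ^ (-((n:ℝ) + 2))) ((2:ℝ) ^ (-((n:ℝ) + 1))), g x := by
  have hpos : (0:ℝ) < 2 ^ (-((n:ℝ) + 1)) := Real.rpow_pos_of_pos two_pos _
  have hS : (Set.Ioi (0:ℝ) \ B) ∩
      Set.Ioc ((2:ℝ) ^ (-((n:ℝ) + 2))) ((2:ℝ) ^ (-((n:ℝ) + 1)))
        = dyadicShell (n + 1) \ B := by
    rw [← dyadicShell_succ]
    ext x
    exact ⟨fun ⟨⟨_, hxB⟩, hx⟩ ↦ ⟨hx, hxB⟩,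
      fun ⟨hx, hxB⟩ ↦ ⟨⟨dyadicShell_subset_Ioi _ hx, hxB⟩, hx⟩⟩
  rw [hS]
  exact setLIntegral_le_mul_setLIntegral_of_le_of_le (measurableSet_Ioc.diff hB)
    (C := g (2 ^ (-((n:ℝ) + 1)))) (fun x hx ↦ hg hpos (hpos.trans hx.2.1) hx.2.1.le)
    (fun x hx ↦ hg (dyadicShell_subset_Ioi _ hx.1) hpos
      (by simpa [dyadicShell_succ] using hx.1.2))
    (volume_inter_dyadicShell_le_mul_volume_dyadicShell_succ_sdiff hc hmeas n)

/-- Shell-by-shell comparison: for nonincreasing `g : (0,∞) → [0,∞]`, shells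
`S_n = (2^{-(n+1)}, 2^{-n}]`, and a measurable `B ⊆ (0,∞)` occupying at most a
fraction `c` of each shell, the integral of `g` over `B ∩ S_n` is bounded by
`(2c/(1-c))` times the integral over `(B^c) ∩ S_{n+1}`. -/
theorem stmt7 (g : ℝ → ENNReal) (hg : AntitoneOn g (Set.Ioi 0))
    (c : ℝ) (hc : c ∈ Set.Ioo (0:ℝ) 1)
    (B : Set ℝ) (hB : MeasurableSet B) (hB0 : B ⊆ Set.Ioi 0)
    (hmeas : ∀ m : ℕ,
      volume (B ∩ Set.Ioc ((2:ℝ) ^ (-((m:ℝ) + 1))) ((2:ℝ) ^ (-(m:ℝ))))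
        ≤ ENNReal.ofReal (c * (2:ℝ) ^ (-((m:ℝ) + 1))))
    (n : ℕ) :
    ∫⁻ x in B ∩ Set.Ioc ((2:ℝ) ^ (-((n:ℝ) + 1))) ((2:ℝ) ^ (-(n:ℝ))), g x
      ≤ ENNReal.ofReal (2 * c / (1 - c)) *
        ∫⁻ x in (Set.Ioi (0:ℝ) \ B) ∩
            Set.Ioc ((2:ℝ) ^ (-((n:ℝ) + 2))) ((2:ℝ) ^ (-((n:ℝ) + 1))), g x :=
  stmt7_general g hg c hc B hB hmeas n
end
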